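/- Let m, n₁,…,n_l be positive integers, n := m + n₁ + ⋯ + n_l, and let S be the polynomial ring over 𝔽₂ = ℤ/2 in the indeterminates α₁,…,α_m and β_i^{(p)} for 1 ≤ p ≤ l, 1 ≤ i ≤ ⌊n_p/2⌋. With the conventions α₀ := 1, α_i := α_{2m−i} for m < i ≤ 2m, α_i := 0 for i < 0 or i > 2m, β_0^{(p)} := 1, β_i^{(p)} := β_{n_p−i}^{(p)} for ⌊n_p/2⌋ < i ≤ n_p, β_i^{(p)} := 0 for i < 0 or i > n_p, define μ_j := Σ_{a₁+⋯+a_l = j} β_{a₁}^{(1)}⋯β_{a_l}^{(l)} and ν_k := Σ_{i=0}^{⌊k/2⌋} α_{k−2i}·μ_i + (binom(2n, k) mod 2), elements of S. Let B ⊆ S be the subring generated by all the β_i^{(p)}. Then: (a) for every odd k ≥ 1, ν_k is a B-linear combination of the elements α_i with i odd, 1 ≤ i ≤ m; (b) the ideal of S generated by {ν_i : 1 ≤ i ≤ m, i odd} equals the ideal generated by {α_i : 1 ≤ i ≤ m, i odd}; (c) the elements of {ν_i : 1 ≤ i ≤ m, i odd} form an S-regular sequence in any order. -/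

import Mathlib

open MvPolynomial

/-- A sequence (given as a list) `a₁, …, aₙ` in a commutative ring `A` is `A`-regular if for
each `i`, `aᵢ` is not a zero divisor on `A ⧸ (a₁, …, a_{i-1})`. -/
def IsRegularSeq {A : Type*} [CommRing A] (l : List A) : Prop :=
  ∀ (i : ℕ) (h : i < l.length), ∀ x : A,
    l.get ⟨i, h⟩ * x ∈ Ideal.span {y | y ∈ l.take i} →
      x ∈ Ideal.span {y | y ∈ l.take i}

/-- The element `α_i` of the polynomial ring `S` over `𝔽₂` in the indeterminates
`α₁, …, α_m` and `β_i^{(p)}`, with the conventions `α_0 = 1`, `α_i = α_{2m−i}` for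
`m < i ≤ 2m`, and `α_i = 0` for `i > 2m`. -/
noncomputable def alS (m l : ℕ) (n : Fin l → ℕ) (i : ℕ) :
    MvPolynomial (Fin m ⊕ Σ p : Fin l, Fin (n p / 2)) (ZMod 2) :=
  if h : i ≤ 2 * m then
    (if h1 : 1 ≤ min i (2 * m - i) then X (Sum.inl ⟨min i (2 * m - i) - 1, by omega⟩) else 1)
  else 0

/-- The element `β_i^{(p)}` of `S`, with the conventions `β_0^{(p)} = 1`,
`β_i^{(p)} = β_{n_p−i}^{(p)}` for `⌊n_p/2⌋ < i ≤ n_p`, and `β_i^{(p)} = 0` for `i > n_p`. -/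
noncomputable def beS (m l : ℕ) (n : Fin l → ℕ) (p : Fin l) (i : ℕ) :
    MvPolynomial (Fin m ⊕ Σ p : Fin l, Fin (n p / 2)) (ZMod 2) :=
  if h : i ≤ n p then
    (if h1 : 1 ≤ min i (n p - i) then X (Sum.inr ⟨p, ⟨min i (n p - i) - 1, by omega⟩⟩) else 1)
  else 0

/-- `μ_j := Σ_{a₁+⋯+a_l = j} β_{a₁}^{(1)} ⋯ β_{a_l}^{(l)}`. -/
noncomputable def muS (m l : ℕ) (n : Fin l → ℕ) (j : ℕ) :
    MvPolynomial (Fin m ⊕ Σ p : Fin l, Fin (n p / 2)) (ZMod 2) :=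
  ∑ a ∈ (Fintype.piFinset fun _ : Fin l => Finset.range (j + 1)).filter
      (fun a => ∑ p, a p = j),
    ∏ p, beS m l n p (a p)

/-- `ν_k := Σ_{i=0}^{⌊k/2⌋} α_{k−2i}·μ_i + (binom(2n, k) mod 2)`, with
`n = m + n₁ + ⋯ + n_l`. -/
noncomputable def nuS (m l : ℕ) (n : Fin l → ℕ) (k : ℕ) :
    MvPolynomial (Fin m ⊕ Σ p : Fin l, Fin (n p / 2)) (ZMod 2) :=
  (∑ i ∈ Finset.range (k / 2 + 1), alS m l n (k - 2 * i) * muS m l n i) +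
    (Nat.choose (2 * (m + ∑ p, n p)) k :
      MvPolynomial (Fin m ⊕ Σ p : Fin l, Fin (n p / 2)) (ZMod 2))

/-- The subring `B ⊆ S` generated by all the indeterminates `β_i^{(p)}`. -/
noncomputable def Bsub (m l : ℕ) (n : Fin l → ℕ) :
    Subring (MvPolynomial (Fin m ⊕ Σ p : Fin l, Fin (n p / 2)) (ZMod 2)) :=
  Subring.closure (Set.range fun v : Σ p : Fin l, Fin (n p / 2) => X (Sum.inr v))

/-!
For odd `k` the binomial term of `ν_k` vanishes mod 2 (Lucas), so
`ν_k = α_k + ∑_{i ≥ 1} μ_i α_{k-2i}`, and the symmetry `α_{2m-t} = α_t` folds every odd index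
into `[1, m]`: this is (a). For odd `k ≤ m` the expansion is unitriangular with coefficients in `B`,
so it can be inverted, expressing each `α_k` as a `B`-combination of the `ν_j`: this gives (b).
For (c), the substitution `α_k ↦ ν_k` (odd `k ≤ m`) is therefore a surjective endomorphism of the
Noetherian ring `S`, hence an automorphism; it maps the regular sequence of distinct variables
`α_k` to the `ν_k`.
-/

theorem List.Nodup.getElem_notMem_take {α : Type*} {L : List α} (hL : L.Nodup) {i : ℕ}
    (hi : i < L.length) : L[i] ∉ L.take i := by
  rw [← L.take_append_drop i, List.nodup_append] at hL
  refine fun h => hL.2.2 _ h _ ?_ rfl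
  rw [List.drop_eq_getElem_cons hi]
  exact List.mem_cons_self

theorem IsRegularSeq.map_ringEquiv {A B : Type*} [CommRing A] [CommRing B] {L : List A}
    (h : IsRegularSeq L) (e : A ≃+* B) : IsRegularSeq (L.map e) := by
  intro i hi x hx
  have hspan : Ideal.span {y | y ∈ (L.map e).take i} =
      Ideal.comap e.symm (Ideal.span {y | y ∈ L.take i}) := by
    rw [Ideal.comap_symm, Ideal.map_span, ← List.map_take]
    congr 1
    ext
    simp [-List.map_take]
  simp only [List.get_eq_getElem, List.getElem_map, hspan, Ideal.mem_comap, map_mul,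
    RingEquiv.symm_apply_apply] at hx ⊢
  exact h i (by simpa using hi) _ hx

theorem MvPolynomial.isRegularSeq_of_nodup_of_forall_eq_X {σ R : Type*} [CommRing R]
    {L : List (MvPolynomial σ R)} (hX : ∀ y ∈ L, ∃ v, y = X v) (hL : L.Nodup) :
    IsRegularSeq L := by
  intro i hi x hx
  obtain ⟨v, hv⟩ := hX _ (L.get_mem ⟨i, hi⟩)
  have hprefix : {y | y ∈ L.take i} = X '' {w | X w ∈ L.take i} := by
    ext y
    refine ⟨fun hy => ?_, fun ⟨w, hw, hwy⟩ => hwy ▸ hw⟩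
    obtain ⟨w, rfl⟩ := hX y (List.mem_of_mem_take hy)
    exact ⟨w, hy, rfl⟩
  have hv_notMem : X v ∉ L.take i := by
    rw [← hv, List.get_eq_getElem]
    exact hL.getElem_notMem_take hi
  rw [hv, hprefix, mem_ideal_span_X_image] at hx
  rw [hprefix, mem_ideal_span_X_image]
  intro d hd
  obtain ⟨w, hw, hwd⟩ := hx (Finsupp.single v 1 + d) <| by
    rw [mem_support_iff, coeff_X_mul]
    exact mem_support_iff.mp hd
  refine ⟨w, hw, ?_⟩
  have hvw : v ≠ w := fun h => hv_notMem (h ▸ hw)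
  rwa [Finsupp.add_apply, Finsupp.single_eq_of_ne hvw.symm, zero_add] at hwd

theorem RingHom.injective_of_surjective_of_isNoetherianRing {R : Type*} [CommRing R]
    [IsNoetherianRing R] (f : R →+* R) (hf : Function.Surjective f) : Function.Injective f := by
  obtain ⟨N, hN⟩ := monotone_stabilizes_iff_noetherian.mpr (inferInstanceAs (IsNoetherian R R))
    ⟨fun k => RingHom.ker (f ^ k), fun j k hjk x hx => by
      rw [RingHom.mem_ker, RingHom.coe_pow] at hx ⊢
      rw [← Nat.sub_add_cancel hjk, Function.iterate_add_apply, hx, iterate_map_zero]⟩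
  rw [injective_iff_map_eq_zero]
  intro x hx
  obtain ⟨y, rfl⟩ := (RingHom.coe_pow f N ▸ hf.iterate N) x
  have : y ∈ RingHom.ker (f ^ (N + 1)) := by
    rwa [RingHom.mem_ker, RingHom.coe_pow, Function.iterate_succ_apply', ← RingHom.coe_pow]
  have hstab : RingHom.ker (f ^ (N + 1)) = RingHom.ker (f ^ N) := (hN (N + 1) N.le_succ).symm
  rwa [hstab, RingHom.mem_ker] at this

theorem Submodule.mul_mem_of_mem_subring {A : Type*} [CommRing A] {B : Subring A}
    (p : Submodule B A) {b x : A} (hb : b ∈ B) (hx : x ∈ p) : b * x ∈ p :=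
  p.smul_mem ⟨b, hb⟩ hx

theorem Submodule.span_subset_subring {A : Type*} [CommRing A] {B T : Subring A} (hBT : B ≤ T)
    {s : Set A} (hs : s ⊆ T) : (Submodule.span B s : Set A) ⊆ T := fun _ hx =>
  Submodule.span_induction hs T.zero_mem (fun _ _ _ _ => T.add_mem)
    (fun b _ _ hx => T.mul_mem (hBT b.2) hx) hx

theorem Nat.two_dvd_choose_two_mul_of_odd (N : ℕ) {k : ℕ} (hk : Odd k) :
    2 ∣ (2 * N).choose k := by
  have h := Choose.choose_modEq_choose_mod_mul_choose_div_nat (n := 2 * N) (k := k) (p := 2)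
  rw [Nat.mul_mod_right, Nat.odd_iff.mp hk, Nat.choose_zero_succ, zero_mul] at h
  exact Nat.modEq_zero_iff_dvd.mp h

def oddIndices (m : ℕ) : Finset ℕ := (Finset.Icc 1 m).filter Odd

theorem mem_oddIndices {m k : ℕ} : k ∈ oddIndices m ↔ Odd k ∧ 1 ≤ k ∧ k ≤ m := by
  rw [oddIndices, Finset.mem_filter, Finset.mem_Icc, and_comm]

section

variable {m l : ℕ} {n : Fin l → ℕ}

local notation "𝒮" => MvPolynomial (Fin m ⊕ Σ p : Fin l, Fin (n p / 2)) (ZMod 2)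

theorem alS_eq_X (j : Fin m) : alS m l n (j + 1) = X (Sum.inl j) := by
  have hj := j.isLt
  rw [alS, dif_pos (by omega), dif_pos (by omega)]
  congr
  omega

theorem alS_of_two_mul_lt {t : ℕ} (h : 2 * m < t) : alS m l n t = 0 := by
  rw [alS, dif_neg (by omega)]

theorem alS_two_mul_sub {t : ℕ} (h : t ≤ 2 * m) : alS m l n (2 * m - t) = alS m l n t := by
  have hmin : min (2 * m - t) (2 * m - (2 * m - t)) = min t (2 * m - t) := by omega
  rw [alS, alS, dif_pos (by omega), dif_pos h]
  simp only [hmin]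

theorem beS_mem_Bsub (p : Fin l) (i : ℕ) : beS m l n p i ∈ Bsub m l n := by
  rw [beS]
  split_ifs
  · exact Subring.subset_closure ⟨_, rfl⟩
  · exact one_mem _
  · exact zero_mem _

theorem muS_mem_Bsub (j : ℕ) : muS m l n j ∈ Bsub m l n :=
  sum_mem fun _ _ => prod_mem fun p _ => beS_mem_Bsub p _

theorem beS_zero (p : Fin l) : beS m l n p 0 = 1 := by
  rw [beS, dif_pos (Nat.zero_le _), dif_neg (by omega)]

theorem muS_zero : muS m l n 0 = 1 := by
  simp [muS, Finset.range_one, Finset.filter_singleton, beS_zero]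

theorem nuS_of_odd {k : ℕ} (hk : Odd k) :
    nuS m l n k = alS m l n k +
      ∑ i ∈ Finset.range (k / 2), muS m l n (i + 1) * alS m l n (k - 2 * (i + 1)) := by
  obtain ⟨c, hc⟩ := Nat.two_dvd_choose_two_mul_of_odd (m + ∑ p, n p) hk
  have hchoose : (((2 * c : ℕ)) : 𝒮) = 0 := (CharP.cast_eq_zero_iff 𝒮 2 _).2 (dvd_mul_right 2 c)
  rw [nuS, hc, hchoose, add_zero, Finset.sum_range_succ', muS_zero, Nat.mul_zero, Nat.sub_zero,
    mul_one, add_comm]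
  simp only [mul_comm]

theorem alS_mem_span_of_odd {t : ℕ} (ht : Odd t) :
    alS m l n t ∈ Submodule.span (Bsub m l n) (alS m l n '' oddIndices m) := by
  rcases le_or_gt t m with htm | htm
  · exact Submodule.subset_span ⟨t, mem_oddIndices.2 ⟨ht, ht.pos, htm⟩, rfl⟩
  rcases le_or_gt t (2 * m) with ht2m | ht2m
  · have hodd : Odd (2 * m - t) := Nat.Even.sub_odd ht2m (even_two_mul m) ht
    rw [← alS_two_mul_sub ht2m]
    exact Submodule.subset_span ⟨2 * m - t, mem_oddIndices.2 ⟨hodd, hodd.pos, by omega⟩, rfl⟩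
  · rw [alS_of_two_mul_lt ht2m]
    exact zero_mem _

theorem nuS_mem_span_alS {k : ℕ} (hk : Odd k) :
    nuS m l n k ∈ Submodule.span (Bsub m l n) (alS m l n '' oddIndices m) := by
  rw [nuS_of_odd hk]
  refine add_mem (alS_mem_span_of_odd hk) (sum_mem fun i hi => ?_)
  have hodd : Odd (k - 2 * (i + 1)) :=
    Nat.Odd.sub_even (by rw [Finset.mem_range] at hi; omega) hk (even_two_mul _)
  exact Submodule.mul_mem_of_mem_subring _ (muS_mem_Bsub _) (alS_mem_span_of_odd hodd)

theorem alS_mem_span_nuS {k : ℕ} (hk : k ∈ oddIndices m) :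
    alS m l n k ∈ Submodule.span (Bsub m l n) (nuS m l n '' oddIndices m) := by
  induction k using Nat.strong_induction_on with
  | _ k ih =>
    obtain ⟨hodd, -, hkm⟩ := mem_oddIndices.1 hk
    rw [eq_sub_of_add_eq (nuS_of_odd hodd).symm]
    refine sub_mem (Submodule.subset_span ⟨k, hk, rfl⟩) (sum_mem fun i hi => ?_)
    rw [Finset.mem_range] at hi
    have hodd' : Odd (k - 2 * (i + 1)) := Nat.Odd.sub_even (by omega) hodd (even_two_mul _)
    exact Submodule.mul_mem_of_mem_subring _ (muS_mem_Bsub _)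
      (ih _ (by omega) (mem_oddIndices.2 ⟨hodd', hodd'.pos, by omega⟩))

theorem exists_nuS_eq_sum_mul_alS {k : ℕ} (hk : Odd k) :
    ∃ c : ℕ → 𝒮, (∀ i, c i ∈ Bsub m l n) ∧
      nuS m l n k = ∑ i ∈ oddIndices m, c i * alS m l n i := by
  obtain ⟨c, hc⟩ := (Submodule.mem_span_image_finset_iff_exists_fun' (Bsub m l n)).1
    (nuS_mem_span_alS hk)
  simp only [Subring.smul_def, smul_eq_mul] at hc
  exact ⟨fun i => c i, fun i => (c i).2, hc.symm⟩

theorem span_nuS_eq_span_alS :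
    Ideal.span (nuS m l n '' oddIndices m) = Ideal.span (alS m l n '' oddIndices m) := by
  apply le_antisymm <;> rw [Ideal.span_le] <;> rintro _ ⟨k, hk, rfl⟩
  · exact Submodule.span_le_restrictScalars (Bsub m l n) 𝒮 (alS m l n '' oddIndices m)
      (nuS_mem_span_alS (mem_oddIndices.1 hk).1)
  · exact Submodule.span_le_restrictScalars (Bsub m l n) 𝒮 (nuS m l n '' oddIndices m)
      (alS_mem_span_nuS hk)

variable (m l n) in
/-- The variable `X (Sum.inl j)` is `α_{j+1}`, so the even `j` are the odd-indexed `α`. -/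
noncomputable def nuSubst : 𝒮 →ₐ[ZMod 2] 𝒮 :=
  aeval (Sum.elim (fun j => if Even (j : ℕ) then nuS m l n (j + 1) else X (Sum.inl j))
    (fun w => X (Sum.inr w)))

theorem nuSubst_X_inr (w : Σ p : Fin l, Fin (n p / 2)) :
    nuSubst m l n (X (Sum.inr w)) = X (Sum.inr w) := by
  rw [nuSubst, aeval_X, Sum.elim_inr]

theorem nuSubst_X_inl_of_not_even {j : Fin m} (hj : ¬Even (j : ℕ)) :
    nuSubst m l n (X (Sum.inl j)) = X (Sum.inl j) := by
  rw [nuSubst, aeval_X, Sum.elim_inl, if_neg hj]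

theorem nuSubst_alS {j : Fin m} (hj : Even (j : ℕ)) :
    nuSubst m l n (alS m l n (j + 1)) = nuS m l n (j + 1) := by
  rw [alS_eq_X, nuSubst, aeval_X, Sum.elim_inl, if_pos hj]

theorem nuSubst_surjective : Function.Surjective (nuSubst m l n) := by
  have hB : Bsub m l n ≤ (nuSubst m l n).range.toSubring := Subring.closure_le.2 <| by
    rintro _ ⟨w, rfl⟩
    exact (nuSubst m l n).mem_range.2 ⟨_, nuSubst_X_inr w⟩
  have hspan : (Submodule.span (Bsub m l n) (nuS m l n '' oddIndices m) : Set 𝒮) ⊆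
      (nuSubst m l n).range := by
    refine Submodule.span_subset_subring hB ?_
    rintro _ ⟨k, hk, rfl⟩
    obtain ⟨hodd, hk1, hkm⟩ := mem_oddIndices.1 hk
    obtain ⟨j, rfl⟩ : ∃ j : Fin m, k = j + 1 := ⟨⟨k - 1, by omega⟩, by simp; omega⟩
    exact ⟨_, nuSubst_alS (by simpa [Nat.odd_add_one] using hodd)⟩
  rw [← AlgHom.range_eq_top, eq_top_iff, ← adjoin_range_X, Algebra.adjoin_le_iff]
  rintro _ ⟨j | w, rfl⟩
  · by_cases hj : Even (j : ℕ)
    · rw [← alS_eq_X]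
      exact hspan (alS_mem_span_nuS (mem_oddIndices.2 ⟨hj.add_one, by omega, j.isLt⟩))
    · exact (nuSubst m l n).mem_range.2 ⟨_, nuSubst_X_inl_of_not_even hj⟩
  · exact (nuSubst m l n).mem_range.2 ⟨_, nuSubst_X_inr w⟩

variable (m l n) in
noncomputable def nuSubstEquiv : 𝒮 ≃+* 𝒮 :=
  RingEquiv.ofBijective (nuSubst m l n)
    ⟨RingHom.injective_of_surjective_of_isNoetherianRing (nuSubst m l n).toRingHom
      nuSubst_surjective, nuSubst_surjective⟩

theorem isRegularSeq_of_perm_nuS {L : List 𝒮}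
    (hL : L.Perm (((List.range (m + 1)).filter (fun i => i % 2 == 1)).map (nuS m l n))) :
    IsRegularSeq L := by
  set idx := (List.range (m + 1)).filter (fun i => i % 2 == 1)
  have hidx : ∀ i ∈ idx, ∃ j : Fin m, Even (j : ℕ) ∧ i = j + 1 := by
    intro i hi
    simp only [idx, List.mem_filter, List.mem_range, beq_iff_eq] at hi
    exact ⟨⟨i - 1, by omega⟩, Nat.even_iff.2 (by simp; omega), by simp; omega⟩
  set e := nuSubstEquiv m l n
  have hperm : (L.map e.symm).Perm (idx.map (alS m l n)) := by
    have hmap : idx.map (nuS m l n) = (idx.map (alS m l n)).map e := by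
      rw [List.map_map]
      refine List.map_congr_left fun i hi => ?_
      obtain ⟨j, hj, rfl⟩ := hidx i hi
      exact (nuSubst_alS hj).symm
    simpa [hmap, List.map_map, Function.comp_def] using hL.map e.symm
  have hX : ∀ y ∈ idx.map (alS m l n), ∃ v, y = X v := by
    simp only [List.mem_map]
    rintro _ ⟨i, hi, rfl⟩
    obtain ⟨j, -, rfl⟩ := hidx i hi
    exact ⟨_, alS_eq_X j⟩
  have hnodup : (idx.map (alS m l n)).Nodup := by
    refine (List.nodup_range.filter _).map_on fun i hi i' hi' h => ?_
    obtain ⟨j, -, rfl⟩ := hidx i hi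
    obtain ⟨j', -, rfl⟩ := hidx i' hi'
    rw [alS_eq_X, alS_eq_X, X_inj, Sum.inl_injective.eq_iff] at h
    rw [h]
  have hreg := (isRegularSeq_of_nodup_of_forall_eq_X (fun y hy => hX y (hperm.mem_iff.1 hy))
    (hperm.nodup_iff.2 hnodup)).map_ringEquiv e
  simpa [List.map_map, Function.comp_def] using hreg

end

theorem stmt_14_general (m l : ℕ) (n : Fin l → ℕ) :
    (∀ k : ℕ, Odd k →
      ∃ c : ℕ → MvPolynomial (Fin m ⊕ Σ p : Fin l, Fin (n p / 2)) (ZMod 2),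
        (∀ i, c i ∈ Bsub m l n) ∧
        nuS m l n k = ∑ i ∈ (Finset.Icc 1 m).filter (fun i => Odd i), c i * alS m l n i) ∧
    Ideal.span {x | ∃ i, Odd i ∧ 1 ≤ i ∧ i ≤ m ∧ x = nuS m l n i} =
      Ideal.span {x | ∃ i, Odd i ∧ 1 ≤ i ∧ i ≤ m ∧ x = alS m l n i} ∧
    (∀ l' : List (MvPolynomial (Fin m ⊕ Σ p : Fin l, Fin (n p / 2)) (ZMod 2)),
      l'.Perm (((List.range (m + 1)).filter (fun i => i % 2 == 1)).map (nuS m l n)) →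
        IsRegularSeq l') := by
  have hset (f : ℕ → MvPolynomial (Fin m ⊕ Σ p : Fin l, Fin (n p / 2)) (ZMod 2)) :
      {x | ∃ i, Odd i ∧ 1 ≤ i ∧ i ≤ m ∧ x = f i} = f '' oddIndices m := by
    ext x
    simp [mem_oddIndices, eq_comm, and_assoc]
  rw [hset, hset]
  exact ⟨fun _ => exists_nuS_eq_sum_mul_alS, span_nuS_eq_span_alS,
    fun _ => isRegularSeq_of_perm_nuS⟩

/-- (a) for odd `k`, `ν_k` is a `B`-linear combination of the `α_i` with `i` odd, `1 ≤ i ≤ m`;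
(b) the ideal generated by the `ν_i` (`1 ≤ i ≤ m` odd) equals the ideal generated by the
`α_i` (`1 ≤ i ≤ m` odd); (c) the `ν_i` (`1 ≤ i ≤ m` odd) form an `S`-regular sequence in
any order. -/
theorem stmt_14 (m l : ℕ) (hm : 1 ≤ m) (hl : 1 ≤ l) (n : Fin l → ℕ) (hn : ∀ p, 1 ≤ n p) :
    (∀ k : ℕ, Odd k →
      ∃ c : ℕ → MvPolynomial (Fin m ⊕ Σ p : Fin l, Fin (n p / 2)) (ZMod 2),
        (∀ i, c i ∈ Bsub m l n) ∧
        nuS m l n k = ∑ i ∈ (Finset.Icc 1 m).filter (fun i => Odd i), c i * alS m l n i) ∧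
    Ideal.span {x | ∃ i, Odd i ∧ 1 ≤ i ∧ i ≤ m ∧ x = nuS m l n i} =
      Ideal.span {x | ∃ i, Odd i ∧ 1 ≤ i ∧ i ≤ m ∧ x = alS m l n i} ∧
    (∀ l' : List (MvPolynomial (Fin m ⊕ Σ p : Fin l, Fin (n p / 2)) (ZMod 2)),
      l'.Perm (((List.range (m + 1)).filter (fun i => i % 2 == 1)).map (nuS m l n)) →
        IsRegularSeq l') :=
  stmt_14_general m l n
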